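/- Let f be a C² functional on a Hilbert space X satisfying: (h1) f ≥ 0; (h2) there exists c such that some nonempty connected component of the sublevel f^c = {x : f(x) < c} is not simply connected; (h3) f satisfies the Palais–Smale condition at every level c₀ ∈ [0,c). Then either f has a continuum of global minimizers in f^c, or there exists a critical point x̂ ∈ f^c of f which is not a strict local minimizer. -/

import Mathlib

open Filter Topology Metric Set

variable {X : Type*} [NormedAddCommGroup X] [InnerProductSpace ℝ X] [CompleteSpace X]

/-- The normalized steepest descent flow of `f`:
`η(0,x) = x` and `dη/dt = -∇f(η)/(1+‖∇f(η)‖)`. -/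
def IsNSDFlow (f : X → ℝ) (η : ℝ → X → X) : Prop :=
  (∀ x, η 0 x = x) ∧
  ∀ x t, HasDerivAt (fun s => η s x)
    (-((1 + ‖gradient f (η t x)‖)⁻¹ • gradient f (η t x))) t

/-- The ω-limit set of `x` for the flow `η`. -/
def omegaLim (η : ℝ → X → X) (x : X) : Set X :=
  {y | ∃ t : ℕ → ℝ, Tendsto t atTop atTop ∧ Tendsto (fun n => η (t n) x) atTop (𝓝 y)}

/-- `x₀` is a strict local minimizer of `f`. -/
def StrictLocalMin (f : X → ℝ) (x₀ : X) : Prop :=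
  ∃ r₀ > 0, ∀ r : ℝ, 0 < r → r < r₀ → ∃ ε > 0, ∀ y ∈ Metric.sphere x₀ r, f x₀ + ε ≤ f y

/-- The loop `γ : [0,1] → X` is contractible within the set `S`. -/
def LoopContractibleIn (S : Set X) (γ : ℝ → X) : Prop :=
  ∃ (h : ℝ → ℝ → X) (x₀ : X),
    ContinuousOn (fun p : ℝ × ℝ => h p.1 p.2) (Icc 0 1 ×ˢ Icc 0 1) ∧
    (∀ l ∈ Icc (0:ℝ) 1, ∀ s ∈ Icc (0:ℝ) 1, h l s ∈ S) ∧
    (∀ s ∈ Icc (0:ℝ) 1, h 0 s = γ s) ∧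
    (∀ s ∈ Icc (0:ℝ) 1, h 1 s = x₀) ∧
    ∀ l ∈ Icc (0:ℝ) 1, h l 0 = h l 1

/-- A subset `S` is simply connected: every loop in `S` is contractible in `S`. -/
def SimplyConnIn (S : Set X) : Prop :=
  ∀ γ : ℝ → X, ContinuousOn γ (Icc 0 1) → (∀ s ∈ Icc (0:ℝ) 1, γ s ∈ S) →
    γ 0 = γ 1 → LoopContractibleIn S γ

/-!
Minimax over noncontractible loops. Let `m` be the infimum, over loops in the component `S`
that are not contractible in `S`, of the maximum of `f` along the loop; then `0 ≤ m < c`.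
Suppose every critical point at level `m` were a strict local minimizer. By (PS) they are then
finitely many, and each sits in a small ball on whose boundary sphere `f > m`. A noncontractible
loop whose maximum is close to `m` cannot enter such a ball (it would lie in the convex ball and
be contractible), so by (PS) `‖∇f‖ ≥ α > 0` wherever such a loop is near level `m`.
Ekeland's principle on the complete space of these loops gives a loop `g` whose maximum cannot
be lowered by more than `β/2` times the distance moved. Pushing `g` for a short time `t` along
the normalized negative gradient lowers its maximum by `t β`, moves it by at most `t` and keeps it
noncontractible in `S`: a contradiction. Hence some critical point in `f^c` is not a strict local
minimizer.
-/

open scoped RealInnerProductSpace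

section Ekeland

variable {E : Type*} [MetricSpace E] (Φ : E → ℝ) (k : ℝ)

def improvementSet (v : E) : Set E := {w | Φ w + k * dist w v ≤ Φ v}

variable {Φ k}

theorem self_mem_improvementSet (v : E) : v ∈ improvementSet Φ k v := by
  simp [improvementSet]

theorem improvementSet_trans (hk : 0 ≤ k) {v w z : E} (hw : w ∈ improvementSet Φ k v)
    (hz : z ∈ improvementSet Φ k w) : z ∈ improvementSet Φ k v := by
  simp only [improvementSet, mem_ofPred_eq] at hw hz ⊢
  nlinarith [dist_triangle z w v]

theorem isClosed_improvementSet (hΦ : LowerSemicontinuous Φ) (v : E) :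
    IsClosed (improvementSet Φ k v) :=
  (hΦ.add (continuous_const.mul (continuous_id.dist continuous_const)).lowerSemicontinuous)
    |>.isClosed_preimage (Φ v)

theorem exists_mem_improvementSet_forall_dist_le (hbdd : BddBelow (range Φ)) (hk : 0 < k)
    (v : E) {ε : ℝ} (hε : 0 < ε) :
    ∃ w ∈ improvementSet Φ k v, ∀ z ∈ improvementSet Φ k w, dist z w ≤ ε / k := by
  obtain ⟨_, ⟨w, hw, rfl⟩, hlt⟩ := Real.lt_sInf_add_pos (s := Φ '' improvementSet Φ k v)
    ⟨Φ v, v, self_mem_improvementSet v, rfl⟩ hε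
  refine ⟨w, hw, fun z hz => (le_div_iff₀' hk).2 ?_⟩
  have hinf : sInf (Φ '' improvementSet Φ k v) ≤ Φ z :=
    csInf_le (hbdd.mono (image_subset_range _ _)) ⟨z, improvementSet_trans hk.le hw hz, rfl⟩
  simp only [improvementSet, mem_ofPred_eq] at hz
  linarith

/-- Ekeland's variational principle (weak form). -/
theorem exists_forall_le_add_mul_dist [CompleteSpace E] [Nonempty E]
    (hΦ : LowerSemicontinuous Φ) (hbdd : BddBelow (range Φ)) (hk : 0 < k) :
    ∃ v, ∀ u, Φ v ≤ Φ u + k * dist u v := by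
  choose next next_mem next_small using fun (n : ℕ) v =>
    exists_mem_improvementSet_forall_dist_le hbdd hk v (show (0 : ℝ) < (1 / 2) ^ n by positivity)
  let u : ℕ → E := fun n => Nat.rec (next 0 (Classical.arbitrary E)) (fun n v => next (n + 1) v) n
  have u_small : ∀ n, ∀ z ∈ improvementSet Φ k (u n), dist z (u n) ≤ (1 / 2) ^ n / k := by
    rintro (_ | n) <;> exact next_small _ _
  have u_mono : ∀ {n m}, n ≤ m → u m ∈ improvementSet Φ k (u n) := by
    intro n m hnm
    induction m, hnm using Nat.le_induction with
    | base => exact self_mem_improvementSet _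
    | succ m _ ih => exact improvementSet_trans hk.le ih (next_mem (m + 1) (u m))
  have geom : Tendsto (fun n : ℕ => (1 / 2 : ℝ) ^ n / k) atTop (𝓝 0) := by
    simpa using (tendsto_pow_atTop_nhds_zero_of_lt_one (by norm_num : (0 : ℝ) ≤ 1 / 2)
      (by norm_num)).div_const k
  have tendsto_of_mem : ∀ z, (∀ n, z ∈ improvementSet Φ k (u n)) → Tendsto u atTop (𝓝 z) :=
    fun z hz => tendsto_iff_dist_tendsto_zero.2 <| squeeze_zero (fun _ => dist_nonneg)
      (fun n => by rw [dist_comm]; exact u_small n z (hz n)) geom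
  obtain ⟨v, hv⟩ := cauchySeq_tendsto_of_complete <| cauchySeq_of_le_tendsto_0' (s := u) _
    (fun n m hnm => by rw [dist_comm]; exact u_small n _ (u_mono hnm)) geom
  have v_mem : ∀ n, v ∈ improvementSet Φ k (u n) := fun n =>
    (isClosed_improvementSet hΦ _).mem_of_tendsto hv (eventually_atTop.2 ⟨n, fun _ => u_mono⟩)
  refine ⟨v, fun w => not_lt.1 fun hw => ?_⟩
  -- `w` would improve on `v`, hence on every `u n`, so it is also the limit of `u`.
  have hwv : w ∈ improvementSet Φ k v := hw.le
  obtain rfl : w = v := tendsto_nhds_unique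
    (tendsto_of_mem w fun n => improvementSet_trans hk.le (v_mem n) hwv) hv
  simp at hw

theorem IsClosed.exists_forall_le_add_mul_dist [CompleteSpace E] {s : Set E} (hs : IsClosed s)
    (hne : s.Nonempty) (hΦ : LowerSemicontinuous Φ) (hbdd : BddBelow (Φ '' s)) (hk : 0 < k) :
    ∃ v ∈ s, ∀ u ∈ s, Φ v ≤ Φ u + k * dist u v := by
  have := hs.completeSpace_coe
  have := hne.to_subtype
  obtain ⟨v, hv⟩ := _root_.exists_forall_le_add_mul_dist (Φ := Φ ∘ Subtype.val)
    (hΦ.comp continuous_subtype_val) (by rwa [range_comp, Subtype.range_coe]) hk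
  exact ⟨v, v.2, fun u hu => hv ⟨u, hu⟩⟩

end Ekeland

section Loops

variable {E : Type*} [NormedAddCommGroup E]

def IsLoopHomotopyIn (S : Set E) (H : ℝ → ℝ → E) (γ γ' : ℝ → E) : Prop :=
  ContinuousOn (fun p : ℝ × ℝ => H p.1 p.2) (Icc 0 1 ×ˢ Icc 0 1) ∧
    (∀ l ∈ Icc (0:ℝ) 1, ∀ s ∈ Icc (0:ℝ) 1, H l s ∈ S) ∧
    (∀ s ∈ Icc (0:ℝ) 1, H 0 s = γ s) ∧
    (∀ s ∈ Icc (0:ℝ) 1, H 1 s = γ' s) ∧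
    ∀ l ∈ Icc (0:ℝ) 1, H l 0 = H l 1

variable {S : Set E} {γ γ' γ'' : ℝ → E} {H H' : ℝ → ℝ → E}

theorem loopContractibleIn_iff :
    LoopContractibleIn S γ ↔ ∃ H x, IsLoopHomotopyIn S H γ fun _ => x :=
  Iff.rfl

/-- Clamping `2 * l` and `2 * l - 1` to `[0, 1]` keeps both halves inside the square, where `H`
and `H'` are controlled. -/
theorem IsLoopHomotopyIn.trans (h : IsLoopHomotopyIn S H γ γ') (h' : IsLoopHomotopyIn S H' γ' γ'') :
    IsLoopHomotopyIn S
      (fun l s => if l ≤ 1 / 2 then H (min (2 * l) 1) s else H' (max (2 * l - 1) 0) s) γ γ'' := by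
  obtain ⟨hc, hS, h0, h1, hloop⟩ := h
  obtain ⟨hc', hS', h0', h1', hloop'⟩ := h'
  have first : ∀ l ∈ Icc (0:ℝ) 1, min (2 * l) 1 ∈ Icc (0:ℝ) 1 := fun l hl =>
    ⟨le_min (by linarith [hl.1]) zero_le_one, min_le_right _ _⟩
  have second : ∀ l ∈ Icc (0:ℝ) 1, max (2 * l - 1) 0 ∈ Icc (0:ℝ) 1 := fun l hl =>
    ⟨le_max_right _ _, max_le (by linarith [hl.2]) zero_le_one⟩
  refine ⟨?_, fun l hl s hs => ?_, fun s hs => ?_, fun s hs => ?_, fun l hl => ?_⟩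
  · refine ContinuousOn.if (fun p hp => ?_) ?_ ?_
    · have : p.1 = 1 / 2 := frontier_le_subset_eq continuous_fst continuous_const hp.2
      simp only [this]
      norm_num
      rw [h1 _ (mem_prod.1 hp.1).2, h0' _ (mem_prod.1 hp.1).2]
    · exact (hc.comp (f := fun p : ℝ × ℝ => (min (2 * p.1) 1, p.2)) (by fun_prop)
        fun p hp => ⟨first _ hp.1, hp.2⟩).mono inter_subset_left
    · exact (hc'.comp (f := fun p : ℝ × ℝ => (max (2 * p.1 - 1) 0, p.2)) (by fun_prop)
        fun p hp => ⟨second _ hp.1, hp.2⟩).mono inter_subset_left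
  · dsimp only
    split_ifs
    exacts [hS _ (first l hl) s hs, hS' _ (second l hl) s hs]
  · norm_num [h0 s hs]
  · norm_num [h1' s hs]
  · dsimp only
    split_ifs
    exacts [hloop _ (first l hl), hloop' _ (second l hl)]

theorem LoopContractibleIn.of_isLoopHomotopyIn (h : IsLoopHomotopyIn S H γ γ')
    (hγ' : LoopContractibleIn S γ') : LoopContractibleIn S γ :=
  let ⟨_, x, h'⟩ := hγ'
  loopContractibleIn_iff.2 ⟨_, x, h.trans h'⟩

theorem LoopContractibleIn.congr (hγ : LoopContractibleIn S γ) (heq : EqOn γ γ' (Icc 0 1)) :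
    LoopContractibleIn S γ' :=
  let ⟨H, x, hc, hS, h0, h1, hloop⟩ := hγ
  ⟨H, x, hc, hS, fun s hs => (h0 s hs).trans (heq hs), h1, hloop⟩

variable [NormedSpace ℝ E]

theorem isLoopHomotopyIn_segment (hγ : ContinuousOn γ (Icc 0 1))
    (hγ' : ContinuousOn γ' (Icc 0 1)) (hloop : γ 0 = γ 1) (hloop' : γ' 0 = γ' 1)
    (hS : ∀ s ∈ Icc (0:ℝ) 1, segment ℝ (γ s) (γ' s) ⊆ S) :
    IsLoopHomotopyIn S (fun l s => (1 - l) • γ s + l • γ' s) γ γ' := by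
  refine ⟨?_, fun l hl s hs => hS s hs ⟨1 - l, l, by linarith [hl.2], hl.1, by ring, rfl⟩,
    fun s _ => by simp, fun s _ => by simp, fun l _ => by simp only [hloop, hloop']⟩
  exact ((continuousOn_const.sub continuousOn_fst).smul (hγ.comp continuousOn_snd
    fun p hp => hp.2)).add (continuousOn_fst.smul (hγ'.comp continuousOn_snd fun p hp => hp.2))

theorem loopContractibleIn_of_convex {K : Set E} (hK : Convex ℝ K) (hKS : K ⊆ S)
    (hγ : ContinuousOn γ (Icc 0 1)) (hγK : ∀ s ∈ Icc (0:ℝ) 1, γ s ∈ K) (hloop : γ 0 = γ 1) :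
    LoopContractibleIn S γ :=
  loopContractibleIn_iff.2 ⟨_, γ 0, isLoopHomotopyIn_segment hγ continuousOn_const hloop rfl
    fun s hs => (hK.segment_subset (hγK s hs) (hγK 0 ⟨le_rfl, zero_le_one⟩)).trans hKS⟩

end Loops

section ConnectedComponent

variable {α : Type*} [TopologicalSpace α] {U s : Set α} {x y : α}

theorem IsPreconnected.subset_connectedComponentIn_of_mem (hs : IsPreconnected s) (hys : y ∈ s)
    (hy : y ∈ _root_.connectedComponentIn U x) (hsU : s ⊆ U) :
    s ⊆ _root_.connectedComponentIn U x :=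
  connectedComponentIn_eq hy ▸ hs.subset_connectedComponentIn hys hsU

theorem mem_connectedComponentIn_of_mem_closure (hy : y ∈ closure (connectedComponentIn U x))
    (hyU : y ∈ U) : y ∈ connectedComponentIn U x := by
  obtain ⟨z, hz⟩ := closure_nonempty_iff.1 ⟨y, hy⟩
  exact (isPreconnected_connectedComponentIn.subset_closure (subset_insert y _)
    (insert_subset hy subset_closure)).subset_connectedComponentIn_of_mem
    (mem_insert_of_mem y hz) hz (insert_subset hyU (connectedComponentIn_subset U x))
    (mem_insert y _)

end ConnectedComponent

section LoopMax

open unitInterval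

variable {Y : Type*} [TopologicalSpace Y] {f : Y → ℝ} {g : C(I, Y)} {b : ℝ}

noncomputable def loopMax (f : Y → ℝ) (g : C(I, Y)) : ℝ := ⨆ s, f (g s)

theorem le_loopMax (hf : Continuous f) (g : C(I, Y)) (s : I) : f (g s) ≤ loopMax f g :=
  le_ciSup (isCompact_range (hf.comp g.continuous)).bddAbove s

theorem loopMax_le (h : ∀ s, f (g s) ≤ b) : loopMax f g ≤ b :=
  ciSup_le h

theorem loopMax_lt (hf : Continuous f) (h : ∀ s, f (g s) < b) : loopMax f g < b := by
  obtain ⟨s, -, hs⟩ :=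
    isCompact_univ.exists_isMaxOn univ_nonempty (hf.comp g.continuous).continuousOn
  exact (loopMax_le (f := f) (g := g) fun s' => hs (mem_univ s')).trans_lt (h s)

theorem lowerSemicontinuous_loopMax (hf : Continuous f) : LowerSemicontinuous (loopMax f) :=
  lowerSemicontinuous_ciSup (fun g => (isCompact_range (hf.comp g.continuous)).bddAbove)
    fun s => (hf.comp (continuous_eval_const s)).lowerSemicontinuous

end LoopMax

section NoncontractibleLoops

open unitInterval

variable {E : Type*} [NormedAddCommGroup E] {S : Set E} {f : E → ℝ} {g g' : C(I, E)}

/-- Loops are taken in `C(I, E)`, a complete metric space for the uniform distance, so that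
Ekeland's principle applies; `IccExtend` turns them into the `ℝ → E` loops of
`LoopContractibleIn`. -/
def IsNoncontractibleLoop (S : Set E) (g : C(I, E)) : Prop :=
  (∀ s, g s ∈ S) ∧ g 0 = g 1 ∧ ¬ LoopContractibleIn S (IccExtend zero_le_one g)

theorem exists_isNoncontractibleLoop_of_not_simplyConnIn (h : ¬ SimplyConnIn S) :
    ∃ g, IsNoncontractibleLoop S g := by
  simp only [SimplyConnIn, not_forall] at h
  obtain ⟨γ, hγ, hγS, hloop, hnc⟩ := h
  refine ⟨⟨(Icc 0 1).domRestrict γ, hγ.domRestrict⟩, fun s => hγS s s.2, hloop, fun hc => hnc ?_⟩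
  exact hc.congr fun s hs => IccExtend_of_mem _ _ hs

theorem IsNoncontractibleLoop.apply_lt {c : ℝ} {x₀ : E}
    (hg : IsNoncontractibleLoop (connectedComponentIn {x | f x < c} x₀) g) (s : I) : f (g s) < c :=
  connectedComponentIn_subset {x | f x < c} x₀ (hg.1 s)

noncomputable def minimaxValue (f : E → ℝ) (S : Set E) : ℝ :=
  sInf (loopMax f '' {g | IsNoncontractibleLoop S g})

theorem minimaxValue_le (hf : Continuous f) (hf0 : ∀ x, 0 ≤ f x)
    (hg : IsNoncontractibleLoop S g) : minimaxValue f S ≤ loopMax f g :=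
  csInf_le ⟨0, by rintro _ ⟨g', -, rfl⟩; exact (hf0 _).trans (le_loopMax hf g' 0)⟩ ⟨g, hg, rfl⟩

theorem minimaxValue_nonneg (hf : Continuous f) (hf0 : ∀ x, 0 ≤ f x) :
    0 ≤ minimaxValue f S := by
  rcases eq_empty_or_nonempty {g | IsNoncontractibleLoop S g} with h | h
  · simp [minimaxValue, h]
  · exact le_csInf (h.image _) (by rintro _ ⟨g', -, rfl⟩; exact (hf0 _).trans (le_loopMax hf g' 0))

theorem minimaxValue_lt (hf : Continuous f) (hf0 : ∀ x, 0 ≤ f x) {c : ℝ} {x₀ : E}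
    (hg : IsNoncontractibleLoop (connectedComponentIn {x | f x < c} x₀) g) :
    minimaxValue f (connectedComponentIn {x | f x < c} x₀) < c :=
  (minimaxValue_le hf hf0 hg).trans_lt (loopMax_lt hf hg.apply_lt)

theorem exists_isNoncontractibleLoop_loopMax_lt (hg : IsNoncontractibleLoop S g) {b : ℝ}
    (hb : minimaxValue f S < b) : ∃ g', IsNoncontractibleLoop S g' ∧ loopMax f g' < b := by
  obtain ⟨_, ⟨g', hg', rfl⟩, hlt⟩ :=
    exists_lt_of_csInf_lt (s := loopMax f '' {g | IsNoncontractibleLoop S g}) ⟨_, g, hg, rfl⟩ hb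
  exact ⟨g', hg', hlt⟩

variable [NormedSpace ℝ E]

theorem LoopContractibleIn.of_segment_subset (hg : g 0 = g 1) (hg' : g' 0 = g' 1)
    (hS : ∀ s, segment ℝ (g s) (g' s) ⊆ S)
    (h : LoopContractibleIn S (IccExtend zero_le_one g')) :
    LoopContractibleIn S (IccExtend zero_le_one g) := by
  refine h.of_isLoopHomotopyIn <| isLoopHomotopyIn_segment g.continuous.Icc_extend'.continuousOn
    g'.continuous.Icc_extend'.continuousOn ?_ ?_ fun s hs => ?_
  · rwa [IccExtend_left, IccExtend_right]
  · rwa [IccExtend_left, IccExtend_right]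
  · simpa [IccExtend_of_mem _ _ hs] using hS ⟨s, hs⟩

theorem LoopContractibleIn.eventually_of_isOpen (hS : IsOpen S) (hgS : ∀ s, g s ∈ S)
    (hg : g 0 = g 1) (h : LoopContractibleIn S (IccExtend zero_le_one g)) :
    ∀ᶠ g' : C(I, E) in 𝓝 g, g' 0 = g' 1 → LoopContractibleIn S (IccExtend zero_le_one g') := by
  obtain ⟨ρ, hρ, hsub⟩ := (isCompact_range g.continuous).exists_thickening_subset_open hS
    (range_subset_iff.2 hgS)
  filter_upwards [ball_mem_nhds g hρ] with g' hg' hg'01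
  refine h.of_segment_subset hg'01 hg fun s => ((convex_ball (g s) ρ).segment_subset ?_
    (mem_ball_self hρ)).trans ((ball_subset_thickening (mem_range_self s) ρ).trans hsub)
  exact (ContinuousMap.dist_apply_le_dist s).trans_lt hg'

theorem isClosed_setOf_isNoncontractibleLoop_loopMax_le (hf : Continuous f) {c b : ℝ}
    (hbc : b < c) (x₀ : E) :
    IsClosed {g : C(I, E) |
      IsNoncontractibleLoop (connectedComponentIn {x | f x < c} x₀) g ∧ loopMax f g ≤ b} := by
  set S := connectedComponentIn {x | f x < c} x₀
  have hC : IsClosed {g : C(I, E) | (∀ s, g s ∈ closure S) ∧ g 0 = g 1 ∧ loopMax f g ≤ b} := by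
    have hS : IsClosed {g : C(I, E) | ∀ s, g s ∈ closure S} := by
      rw [ofPred_forall]
      exact isClosed_iInter fun s => isClosed_closure.preimage (continuous_eval_const s)
    exact hS.inter ((isClosed_eq (continuous_eval_const 0) (continuous_eval_const 1)).inter
      ((lowerSemicontinuous_loopMax hf).isClosed_preimage b))
  refine isClosed_of_closure_subset fun g hg => ?_
  obtain ⟨hgS, hg01, hgb⟩ := closure_minimal
    (fun g' (hg' : IsNoncontractibleLoop S g' ∧ loopMax f g' ≤ b) =>
      (⟨fun s => subset_closure (hg'.1.1 s), hg'.1.2.1, hg'.2⟩ :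
        (∀ s, g' s ∈ closure S) ∧ g' 0 = g' 1 ∧ loopMax f g' ≤ b)) hC hg
  have hgS' : ∀ s, g s ∈ S := fun s => mem_connectedComponentIn_of_mem_closure (hgS s)
    (((le_loopMax hf g s).trans hgb).trans_lt hbc)
  refine ⟨⟨hgS', hg01, fun hc => ?_⟩, hgb⟩
  obtain ⟨g', hg', hc'⟩ := ((mem_closure_iff_frequently.1 hg).and_eventually
    (hc.eventually_of_isOpen (isOpen_lt hf continuous_const).connectedComponentIn hgS' hg01)).exists
  exact hg'.1.2.2 (hc' hg'.1.2.1)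

theorem IsNoncontractibleLoop.forall_notMem_ball {U : Set E} {x₀ y : E} {r b : ℝ}
    (hg : IsNoncontractibleLoop (connectedComponentIn U x₀) g) (hgb : ∀ s, f (g s) ≤ b)
    (hball : ball y r ⊆ U) (hsphere : ∀ z ∈ sphere y r, b < f z) (s : I) : g s ∉ ball y r := by
  intro hs
  have hrange : range g ⊆ ball y r := by
    refine (isPreconnected_range g.continuous).subset_left_of_subset_union isOpen_ball
      isClosed_closedBall.isOpen_compl (disjoint_compl_right_iff_subset.2 ball_subset_closedBall)
      ?_ ⟨g s, mem_range_self s, hs⟩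
    rintro _ ⟨s', rfl⟩
    rcases lt_trichotomy (dist (g s') y) r with h | h | h
    · exact Or.inl h
    · exact absurd (hgb s') (hsphere _ h).not_ge
    · exact Or.inr (not_le.2 h)
  refine hg.2.2 <| loopContractibleIn_of_convex (convex_ball y r)
    ((convex_ball y r).isPreconnected.subset_connectedComponentIn_of_mem hs (hg.1 s) hball)
    g.continuous.Icc_extend'.continuousOn (fun t ht => ?_) ?_
  · rw [IccExtend_of_mem _ _ ht]
    exact hrange (mem_range_self _)
  · rw [IccExtend_left, IccExtend_right]
    exact hg.2.1

end NoncontractibleLoops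

theorem IsCompact.exists_pos_forall_dist_lt {α β : Type*} [PseudoMetricSpace α]
    [PseudoMetricSpace β] {K : Set α} (hK : IsCompact K) {G : α → β} (hG : Continuous G)
    {ε : ℝ} (hε : 0 < ε) : ∃ t > 0, ∀ x ∈ K, ∀ z, dist x z < t → dist (G x) (G z) < ε := by
  obtain ⟨t, ht, h⟩ := Metric.mem_uniformity_dist.1 <|
    hK.uniformContinuousAt_of_continuousAt G (fun x _ => hG.continuousAt)
      (Metric.dist_mem_uniformity hε)
  exact ⟨t, ht, fun x hx z hz => h hz hx⟩

section Gradient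

variable {f : X → ℝ}

theorem le_add_inner_gradient_add_mul_norm (hf : Differentiable ℝ f) {x : X} {r β : ℝ}
    (hβ : ∀ z ∈ closedBall x r, ‖gradient f z - gradient f x‖ ≤ β) {y : X}
    (hy : y ∈ closedBall x r) :
    f y ≤ f x + ⟪gradient f x, y - x⟫ + β * ‖y - x‖ := by
  have hderiv : ∀ z ∈ closedBall x r, HasFDerivWithinAt (fun z => f z - ⟪gradient f x, z⟫)
      (InnerProductSpace.toDual ℝ X (gradient f z - gradient f x)) (closedBall x r) z := by
    intro z _
    rw [map_sub]
    exact ((hf z).hasGradientAt.hasFDerivAt.sub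
      (InnerProductSpace.toDual ℝ X (gradient f x)).hasFDerivAt).hasFDerivWithinAt
  have := (convex_closedBall x r).norm_image_sub_le_of_norm_hasFDerivWithin_le hderiv
    (fun z hz => (LinearIsometryEquiv.norm_map _ _).trans_le (hβ z hz))
    (mem_closedBall_self (nonempty_closedBall.1 ⟨y, hy⟩)) hy
  rw [inner_sub_right]
  linarith [(abs_le.1 (Real.norm_eq_abs _ ▸ this)).2]

theorem ContDiff.continuous_gradient (hf : ContDiff ℝ 1 f) : Continuous (gradient f) :=
  (InnerProductSpace.toDual ℝ X).symm.continuous.comp (hf.continuous_fderiv one_ne_zero)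

end Gradient

section NormalizedGradient

variable {f : X → ℝ} {x : X}

noncomputable def normalizedGradient (f : X → ℝ) (x : X) : X :=
  (1 + ‖gradient f x‖)⁻¹ • gradient f x

theorem norm_normalizedGradient_le : ‖normalizedGradient f x‖ ≤ 1 := by
  rw [normalizedGradient, norm_smul, norm_inv, Real.norm_of_nonneg (by positivity),
    inv_mul_le_one₀ (by positivity)]
  linarith

theorem inner_gradient_normalizedGradient :
    ⟪gradient f x, normalizedGradient f x⟫ = ‖gradient f x‖ ^ 2 / (1 + ‖gradient f x‖) := by
  rw [normalizedGradient, real_inner_smul_right, real_inner_self_eq_norm_sq, inv_mul_eq_div]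

theorem div_le_inner_gradient_normalizedGradient {α : ℝ} (hα : 0 ≤ α)
    (h : α ≤ ‖gradient f x‖) : α ^ 2 / (1 + α) ≤ ⟪gradient f x, normalizedGradient f x⟫ := by
  rw [inner_gradient_normalizedGradient, div_le_div_iff₀ (by positivity) (by positivity)]
  have hG := hα.trans h
  nlinarith [mul_nonneg (sub_nonneg.2 h) (add_nonneg hα hG),
    mul_nonneg (mul_nonneg hα hG) (sub_nonneg.2 h)]

theorem Continuous.normalizedGradient (h : Continuous (gradient f)) :
    Continuous (normalizedGradient f) :=
  ((continuous_const.add h.norm).inv₀ fun _ =>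
    (add_pos_of_pos_of_nonneg one_pos (norm_nonneg _)).ne').smul h

theorem le_sub_mul_inner_normalizedGradient (hf : Differentiable ℝ f) {t β τ : ℝ}
    (hβ : ∀ z ∈ closedBall x t, ‖gradient f z - gradient f x‖ ≤ β) (hτ : τ ∈ Icc 0 t) :
    f (x - τ • normalizedGradient f x) ≤
      f x - τ * (⟪gradient f x, normalizedGradient f x⟫ - β) := by
  have hβ0 : 0 ≤ β := by simpa using hβ x (mem_closedBall_self (hτ.1.trans hτ.2))
  have hnorm : ‖τ • normalizedGradient f x‖ ≤ τ := by
    rw [norm_smul, Real.norm_of_nonneg hτ.1]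
    exact mul_le_of_le_one_right hτ.1 norm_normalizedGradient_le
  have := le_add_inner_gradient_add_mul_norm hf hβ
    (y := x - τ • normalizedGradient f x) (by simpa using hnorm.trans hτ.2)
  rw [sub_sub_cancel_left, inner_neg_right, norm_neg, real_inner_smul_right] at this
  nlinarith [mul_le_mul_of_nonneg_left hnorm hβ0]

theorem apply_sub_smul_normalizedGradient_le_max (hf : Differentiable ℝ f) {m δ α β t τ : ℝ}
    (hα : 0 ≤ α) (hαβ : 2 * β ≤ α ^ 2 / (1 + α)) (htβ : t * β ≤ δ / 2)
    (hx : m - δ ≤ f x → α ≤ ‖gradient f x‖)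
    (hβ : ∀ z ∈ closedBall x t, ‖gradient f z - gradient f x‖ ≤ β) (hτ : τ ∈ Icc 0 t) :
    f (x - τ • normalizedGradient f x) ≤ max (m - δ / 2) (f x - τ * β) := by
  have hdesc := le_sub_mul_inner_normalizedGradient hf hβ hτ
  by_cases hfx : m - δ ≤ f x
  · have := div_le_inner_gradient_normalizedGradient hα (hx hfx)
    exact le_max_of_le_right (by nlinarith [hτ.1])
  · have hβ0 : 0 ≤ β := (norm_nonneg _).trans (hβ x (mem_closedBall_self (hτ.1.trans hτ.2)))
    have h0 : 0 ≤ ⟪gradient f x, normalizedGradient f x⟫ := by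
      rw [inner_gradient_normalizedGradient]
      positivity
    have := mul_le_mul_of_nonneg_right hτ.2 hβ0
    exact le_max_of_le_left (by nlinarith [hτ.1])

theorem IsCompact.exists_pos_apply_sub_smul_le_max {K : Set X} (hK : IsCompact K)
    (hf : ContDiff ℝ 1 f) {m δ α β : ℝ} (hδ : 0 < δ) (hα : 0 ≤ α) (hβ : 0 < β)
    (hαβ : 2 * β ≤ α ^ 2 / (1 + α)) (hgrad : ∀ x ∈ K, m - δ ≤ f x → α ≤ ‖gradient f x‖) :
    ∃ t > 0, ∀ x ∈ K, ∀ τ ∈ Icc 0 t,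
      f (x - τ • normalizedGradient f x) ≤ max (m - δ / 2) (f x - τ * β) := by
  obtain ⟨t₀, ht₀, htube⟩ := hK.exists_pos_forall_dist_lt hf.continuous_gradient hβ
  -- `t₀ / 2` keeps each step in the tube where `∇f` moves by less than `β`; `δ / (2 * β)` keeps
  -- the points below level `m - δ`, where `∇f` may vanish, below level `m - δ / 2`.
  refine ⟨min (t₀ / 2) (δ / (2 * β)), by positivity, fun x hx τ hτ =>
    apply_sub_smul_normalizedGradient_le_max (hf.differentiable one_ne_zero) hα hαβ ?_
      (hgrad x hx) (fun z hz => ?_) hτ⟩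
  · calc min (t₀ / 2) (δ / (2 * β)) * β ≤ δ / (2 * β) * β :=
          mul_le_mul_of_nonneg_right (min_le_right _ _) hβ.le
      _ = δ / 2 := by field_simp
  · rw [← dist_eq_norm, dist_comm]
    refine (htube x hx z ?_).le
    linarith [mem_closedBall'.1 hz, min_le_left (t₀ / 2) (δ / (2 * β))]

end NormalizedGradient

theorem StrictLocalMin.eventually_lt {E : Type*} [NormedAddCommGroup E] {f : E → ℝ} {x : E}
    (h : StrictLocalMin f x) : ∀ᶠ y in 𝓝[≠] x, f x < f y := by
  obtain ⟨r₀, hr₀, hsphere⟩ := h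
  filter_upwards [inter_mem_nhdsWithin _ (ball_mem_nhds x hr₀)] with y ⟨hyx, hy⟩
  obtain ⟨ε, hε, hle⟩ := hsphere (dist y x) (dist_pos.2 hyx) hy
  linarith [hle y (mem_sphere.2 rfl)]

section PalaisSmale

variable {f : X → ℝ} {c₀ : ℝ}

def PalaisSmaleAt (f : X → ℝ) (c₀ : ℝ) : Prop :=
  ∀ u : ℕ → X, Tendsto (fun m => f (u m)) atTop (𝓝 c₀) →
    Tendsto (fun m => gradient f (u m)) atTop (𝓝 0) →
    ∃ (φ : ℕ → ℕ) (y : X), StrictMono φ ∧ Tendsto (fun k => u (φ k)) atTop (𝓝 y)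

def criticalSetAt (f : X → ℝ) (c₀ : ℝ) : Set X := {x | f x = c₀ ∧ gradient f x = 0}

theorem isClosed_criticalSetAt (hf : Continuous f) (hgf : Continuous (gradient f)) :
    IsClosed (criticalSetAt f c₀) :=
  (isClosed_eq hf continuous_const).inter (isClosed_eq hgf continuous_const)

theorem PalaisSmaleAt.isCompact_criticalSetAt (hPS : PalaisSmaleAt f c₀) (hf : Continuous f)
    (hgf : Continuous (gradient f)) : IsCompact (criticalSetAt f c₀) := by
  refine IsSeqCompact.isCompact fun u hu => ?_
  obtain ⟨φ, y, hφ, hy⟩ := hPS u (tendsto_const_nhds.congr fun m => (hu m).1.symm)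
    (tendsto_const_nhds.congr fun m => (hu m).2.symm)
  exact ⟨y, (isClosed_criticalSetAt hf hgf).mem_of_tendsto hy (.of_forall fun k => hu (φ k)),
    φ, hφ, hy⟩

theorem PalaisSmaleAt.exists_le_norm_gradient (hPS : PalaisSmaleAt f c₀) (hf : Continuous f)
    (hgf : Continuous (gradient f)) {U : Set X} (hU : IsOpen U)
    (hKU : criticalSetAt f c₀ ⊆ U) :
    ∃ δ > 0, ∃ α > 0, ∀ x ∉ U, |f x - c₀| ≤ δ → α ≤ ‖gradient f x‖ := by
  by_contra! h
  choose u huU hu_val hu_grad using fun n : ℕ =>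
    h (1 / (n + 1)) Nat.one_div_pos_of_nat (1 / (n + 1)) Nat.one_div_pos_of_nat
  have hval : Tendsto (fun m => f (u m)) atTop (𝓝 c₀) :=
    tendsto_iff_dist_tendsto_zero.2 <| squeeze_zero (fun _ => dist_nonneg)
      (fun n => hu_val n) tendsto_one_div_add_atTop_nhds_zero_nat
  have hgrad : Tendsto (fun m => gradient f (u m)) atTop (𝓝 0) :=
    tendsto_zero_iff_norm_tendsto_zero.2 <| squeeze_zero (fun _ => norm_nonneg _)
      (fun n => (hu_grad n).le) tendsto_one_div_add_atTop_nhds_zero_nat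
  obtain ⟨φ, y, hφ, hy⟩ := hPS u hval hgrad
  have hyK : y ∈ criticalSetAt f c₀ :=
    ⟨tendsto_nhds_unique ((hf.tendsto y).comp hy) (hval.comp hφ.tendsto_atTop),
      tendsto_nhds_unique ((hgf.tendsto y).comp hy) (hgrad.comp hφ.tendsto_atTop)⟩
  exact hU.isClosed_compl.mem_of_tendsto hy (.of_forall fun k => huU (φ k)) (hKU hyK)

theorem PalaisSmaleAt.finite_criticalSetAt (hPS : PalaisSmaleAt f c₀) (hf : Continuous f)
    (hgf : Continuous (gradient f)) (hmin : ∀ x ∈ criticalSetAt f c₀, StrictLocalMin f x) :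
    (criticalSetAt f c₀).Finite := by
  refine (hPS.isCompact_criticalSetAt hf hgf).finite <| isDiscrete_iff_nhdsNE.2 fun x hx => ?_
  rw [inf_principal_eq_bot]
  filter_upwards [(hmin x hx).eventually_lt] with y hy hyK
  exact hy.ne (hx.1.trans hyK.1.symm)

end PalaisSmale

section MinimaxPrinciple

open unitInterval

variable {f : X → ℝ} {c : ℝ} {x₀ : X}

theorem IsNoncontractibleLoop.exists_loopMax_add_mul_le (hf : ContDiff ℝ 1 f) {m δ α β : ℝ}
    {g : C(I, X)} (hg : IsNoncontractibleLoop (connectedComponentIn {x | f x < c} x₀) g)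
    (hm : ∀ g', IsNoncontractibleLoop (connectedComponentIn {x | f x < c} x₀) g' →
      m ≤ loopMax f g')
    (hδ : 0 < δ) (hα : 0 ≤ α) (hβ : 0 < β) (hαβ : 2 * β ≤ α ^ 2 / (1 + α))
    (hgrad : ∀ s, m - δ ≤ f (g s) → α ≤ ‖gradient f (g s)‖) :
    ∃ t > 0, ∃ η, IsNoncontractibleLoop (connectedComponentIn {x | f x < c} x₀) η ∧
      dist η g ≤ t ∧ loopMax f η + t * β ≤ loopMax f g := by
  set S := connectedComponentIn {x | f x < c} x₀
  have hfc := hf.continuous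
  obtain ⟨t, ht, hdesc⟩ := (isCompact_range g.continuous).exists_pos_apply_sub_smul_le_max hf hδ
    hα hβ hαβ (forall_mem_range.2 hgrad)
  have hmc : m < c := (hm g hg).trans_lt (loopMax_lt hfc hg.apply_lt)
  let η : C(I, X) := ⟨fun s => g s - t • normalizedGradient f (g s),
    g.continuous.sub (continuous_const.smul
      (hf.continuous_gradient.normalizedGradient.comp g.continuous))⟩
  have hseg : ∀ s, segment ℝ (g s) (η s) ⊆ S := by
    intro s
    refine (convex_segment _ _).isPreconnected.subset_connectedComponentIn_of_mem
      (left_mem_segment ℝ _ _) (hg.1 s) ?_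
    rw [segment_eq_image']
    rintro _ ⟨θ, hθ, rfl⟩
    have hfs := hg.apply_lt s
    have hθt : θ * t ∈ Icc 0 t := ⟨mul_nonneg hθ.1 ht.le, mul_le_of_le_one_left ht.le hθ.2⟩
    have := hdesc _ (mem_range_self s) _ hθt
    simp only [η, ContinuousMap.coe_mk, sub_sub_cancel_left, smul_neg, smul_smul,
      ← sub_eq_add_neg]
    exact this.trans_lt (max_lt (by linarith) (by nlinarith [hθt.1]))
  have hη : IsNoncontractibleLoop S η :=
    ⟨fun s => hseg s (right_mem_segment ℝ _ _), by simp [η, hg.2.1],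
      fun h => hg.2.2 (h.of_segment_subset hg.2.1 (by simp [η, hg.2.1]) hseg)⟩
  have hmax : loopMax f η ≤ max (m - δ / 2) (loopMax f g - t * β) :=
    loopMax_le fun s => (hdesc _ (mem_range_self s) t ⟨ht.le, le_rfl⟩).trans
      (max_le_max le_rfl (by linarith [le_loopMax hfc g s]))
  have hdist : dist η g ≤ t := (ContinuousMap.dist_le ht.le).2 fun s => by
    rw [dist_eq_norm]
    simp only [η, ContinuousMap.coe_mk, sub_sub_cancel_left, norm_neg, norm_smul,
      Real.norm_of_nonneg ht.le]
    exact mul_le_of_le_one_right ht.le norm_normalizedGradient_le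
  refine ⟨t, ht, η, hη, hdist, ?_⟩
  rcases le_max_iff.1 hmax with h | h
  · linarith [hm η hη]
  · linarith

theorem PalaisSmaleAt.exists_le_norm_gradient_of_isNoncontractibleLoop (hf : ContDiff ℝ 1 f)
    {m : ℝ} (hPS : PalaisSmaleAt f m) (hmin : ∀ x ∈ criticalSetAt f m, StrictLocalMin f x)
    (hmc : m < c) :
    ∃ b > m, b < c ∧ ∃ δ > 0, ∃ α > 0, ∀ g,
      IsNoncontractibleLoop (connectedComponentIn {x | f x < c} x₀) g → loopMax f g ≤ b →
        ∀ s, m - δ ≤ f (g s) → α ≤ ‖gradient f (g s)‖ := by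
  have hfc := hf.continuous
  set K := criticalSetAt f m
  have hiso : ∀ y ∈ K, ∃ r > 0, ball y r ⊆ {x | f x < c} ∧
      ∃ e > 0, ∀ z ∈ sphere y r, m + e ≤ f z := by
    intro y hy
    obtain ⟨r₀, hr₀, hsphere⟩ := hmin y hy
    obtain ⟨ρ, hρ, hρc⟩ := Metric.isOpen_iff.1 (isOpen_lt hfc continuous_const) y
      (show f y < c from hy.1 ▸ hmc)
    obtain ⟨e, he, hle⟩ := hsphere (min r₀ ρ / 2) (by positivity)
      (by linarith [min_le_left r₀ ρ, lt_min hr₀ hρ])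
    refine ⟨min r₀ ρ / 2, by positivity, (ball_subset_ball ?_).trans hρc, e, he,
      fun z hz => hy.1 ▸ hle z hz⟩
    linarith [min_le_right r₀ ρ, lt_min hr₀ hρ]
  choose! r hr hrc e he hsphere using hiso
  obtain ⟨δ, hδ, α, hα, hgrad⟩ := hPS.exists_le_norm_gradient hfc hf.continuous_gradient
    (isOpen_biUnion fun y _ => isOpen_ball (x := y) (ε := r y))
    fun y hy => mem_biUnion hy (mem_ball_self (hr y hy))
  have hsmall : ∀ᶠ κ in 𝓝 (0 : ℝ), (∀ y ∈ K, κ < e y) ∧ κ < δ ∧ κ < c - m :=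
    ((eventually_all_finite (hPS.finite_criticalSetAt hfc hf.continuous_gradient hmin)).2
      fun y hy => eventually_lt_nhds (he y hy)).and
      ((eventually_lt_nhds hδ).and (eventually_lt_nhds (sub_pos.2 hmc)))
  obtain ⟨κ, ⟨hκe, hκδ, hκc⟩, hκ : 0 < κ⟩ :=
    ((hsmall.filter_mono (nhdsWithin_le_nhds (s := Ioi 0))).and self_mem_nhdsWithin).exists
  refine ⟨m + κ, by linarith, by linarith, δ, hδ, α, hα,
    fun g hg hgb s hs => hgrad _ ?_ ?_⟩
  · simp only [mem_iUnion, not_exists]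
    exact fun y hy => hg.forall_notMem_ball (fun s' => (le_loopMax hfc g s').trans hgb)
      (hrc y hy) (fun z hz => by linarith [hsphere y hy z hz, hκe y hy]) s
  · rw [abs_le]
    constructor <;> linarith [le_loopMax hfc g s]

theorem exists_mem_criticalSetAt_not_strictLocalMin (hf : ContDiff ℝ 1 f) (hf0 : ∀ x, 0 ≤ f x)
    {g₀ : C(I, X)} (hg₀ : IsNoncontractibleLoop (connectedComponentIn {x | f x < c} x₀) g₀)
    (hPS : PalaisSmaleAt f (minimaxValue f (connectedComponentIn {x | f x < c} x₀))) :
    ∃ x ∈ criticalSetAt f (minimaxValue f (connectedComponentIn {x | f x < c} x₀)),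
      ¬ StrictLocalMin f x := by
  set S := connectedComponentIn {x | f x < c} x₀
  set m := minimaxValue f S
  by_contra! hmin
  have hfc := hf.continuous
  have hm : ∀ g, IsNoncontractibleLoop S g → m ≤ loopMax f g := fun g hg =>
    minimaxValue_le hfc hf0 hg
  obtain ⟨b, hmb, hbc, δ, hδ, α, hα, hgrad⟩ :=
    hPS.exists_le_norm_gradient_of_isNoncontractibleLoop (x₀ := x₀) hf hmin
      (minimaxValue_lt hfc hf0 hg₀)
  obtain ⟨β, hβ, hαβ⟩ : ∃ β > 0, 2 * β ≤ α ^ 2 / (1 + α) :=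
    ⟨α ^ 2 / (1 + α) / 2, by positivity, le_of_eq (by ring)⟩
  obtain ⟨g, ⟨hg, hgb⟩, hekeland⟩ :=
    (isClosed_setOf_isNoncontractibleLoop_loopMax_le hfc hbc x₀).exists_forall_le_add_mul_dist
      ((exists_isNoncontractibleLoop_loopMax_lt hg₀ hmb).imp fun _ h => ⟨h.1, h.2.le⟩)
      (lowerSemicontinuous_loopMax hfc)
      ⟨0, by rintro _ ⟨g, -, rfl⟩; exact (hf0 _).trans (le_loopMax hfc g 0)⟩ (half_pos hβ)
  obtain ⟨t, ht, η, hη, hdist, hdesc⟩ := hg.exists_loopMax_add_mul_le hf hm hδ hα.le hβ hαβ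
    (hgrad g hg hgb)
  -- Ekeland bounds the gain `t * β` of the push by `β / 2` times the distance moved, `≤ t`.
  have := hekeland η ⟨hη, by nlinarith⟩
  nlinarith [mul_le_mul_of_nonneg_left hdist (half_pos hβ).le]

end MinimaxPrinciple

theorem stmt18_general (f : X → ℝ) (hf : ContDiff ℝ 2 f)
    (h1 : ∀ x : X, 0 ≤ f x)
    (c : ℝ) (x₀ : X)
    (h2 : ¬ SimplyConnIn (connectedComponentIn {x : X | f x < c} x₀))
    (h3 : ∀ c₀ : ℝ, 0 ≤ c₀ → c₀ < c →
      ∀ u : ℕ → X, Tendsto (fun m => f (u m)) atTop (𝓝 c₀) →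
        Tendsto (fun m => gradient f (u m)) atTop (𝓝 (0 : X)) →
        ∃ (φ : ℕ → ℕ) (y : X), StrictMono φ ∧ Tendsto (fun k => u (φ k)) atTop (𝓝 y)) :
    (∃ M : Set X, M ⊆ {x : X | f x < c} ∧ IsPreconnected M ∧ M.Nontrivial ∧
      ∀ y ∈ M, ∀ z : X, f y ≤ f z) ∨
    ∃ xhat : X, f xhat < c ∧ gradient f xhat = 0 ∧ ¬ StrictLocalMin f xhat := by
  refine Or.inr ?_
  have hf1 : ContDiff ℝ 1 f := hf.of_le (by norm_num)
  obtain ⟨g₀, hg₀⟩ := exists_isNoncontractibleLoop_of_not_simplyConnIn h2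
  have hmc := minimaxValue_lt hf1.continuous h1 hg₀
  obtain ⟨x, ⟨hxm, hx0⟩, hx⟩ := exists_mem_criticalSetAt_not_strictLocalMin hf1 h1 hg₀
    (h3 _ (minimaxValue_nonneg hf1.continuous h1) hmc)
  exact ⟨x, hxm ▸ hmc, hx0, hx⟩

theorem stmt18 (f : X → ℝ) (hf : ContDiff ℝ 2 f)
    (h1 : ∀ x : X, 0 ≤ f x)
    (c : ℝ) (x₀ : X) (hx₀ : f x₀ < c)
    (h2 : ¬ SimplyConnIn (connectedComponentIn {x : X | f x < c} x₀))
    (h3 : ∀ c₀ : ℝ, 0 ≤ c₀ → c₀ < c →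
      ∀ u : ℕ → X, Tendsto (fun m => f (u m)) atTop (𝓝 c₀) →
        Tendsto (fun m => gradient f (u m)) atTop (𝓝 (0 : X)) →
        ∃ (φ : ℕ → ℕ) (y : X), StrictMono φ ∧ Tendsto (fun k => u (φ k)) atTop (𝓝 y)) :
    (∃ M : Set X, M ⊆ {x : X | f x < c} ∧ IsPreconnected M ∧ M.Nontrivial ∧
      ∀ y ∈ M, ∀ z : X, f y ≤ f z) ∨
    ∃ xhat : X, f xhat < c ∧ gradient f xhat = 0 ∧ ¬ StrictLocalMin f xhat :=
  stmt18_general f hf h1 c x₀ h2 h3
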